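/- arXiv:1904.01267 — 4 statements merged into one kernel-verified Lean document; each statement's English description precedes it below -/
import Mathlib

section
/- Let c be a two-dimensional configuration over a finite alphabet of integers that is annihilated by some non-trivial Laurent polynomial. Then the orbit closure of c contains a configuration c' such that the orbit closure of c' has no one-sided direction of determinism, i.e., for every nonzero u ∈ ℤ², the orbit closure of c' is deterministic in direction u if and only if it is deterministic in direction −u. -/
/-!
Pass to a minimal subshift `Y` inside the orbit closure of `c`; it suffices to show that in `Y`
determinism in direction `u` forces determinism in direction `-u`. Let `d, e ∈ Y` agree on the
half plane `⟪x, u⟫ > 0`. Then `d - e` is annihilated by `f` and vanishes above a line; reading the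
annihilation along the lines orthogonal to `u` through the top face of `f`, from the top downwards,
shows that `d - e` is periodic in the direction orthogonal to `u`. Determinism in direction `u`
means, by compactness, that differences of points of `Y` propagate downwards with bounded gaps `G`.
Families of points of `Y` whose pairwise differences are periodic and meet every slab of width `G`
have bounded size, since such a difference is already seen on a fixed finite set. Take a maximal
family, move it (using minimality) so that it contains `d`, and adjoin `e`: translating the enlarged
family far upwards and passing to a limit produces a larger family of the same kind.
-/

/-- Translation of a configuration by `t`: `(Translate t c) n = c (n - t)`. -/
def Translate {A : Type*} (t : ℤ × ℤ) (c : ℤ × ℤ → A) : ℤ × ℤ → A :=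
  fun n => c (n - t)

/-- The orbit of a configuration: the set of all its translates. -/
def orbit {A : Type*} (c : ℤ × ℤ → A) : Set (ℤ × ℤ → A) :=
  { d | ∃ t : ℤ × ℤ, d = Translate t c }

/-- The orbit closure: the topological closure of the orbit (in the product
topology of the discrete topology on the alphabet). -/
def orbitClosure {A : Type*} [TopologicalSpace A] (c : ℤ × ℤ → A) : Set (ℤ × ℤ → A) :=
  closure (orbit c)

/-- The standard inner product on `ℤ²`. -/
def inner2 (x u : ℤ × ℤ) : ℤ := x.1 * u.1 + x.2 * u.2

/-- The discrete half plane in direction `u`. -/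
def halfPlane (u : ℤ × ℤ) : Set (ℤ × ℤ) := { x | inner2 x u < 0 }

/-- A set of configurations is deterministic in direction `u`: the contents of a
configuration on the half plane `H_u` determine the whole configuration. -/
def DeterministicIn {A : Type*} (X : Set (ℤ × ℤ → A)) (u : ℤ × ℤ) : Prop :=
  ∀ d ∈ X, ∀ e ∈ X, Set.EqOn d e (halfPlane u) → d = e

/-- The set of `D`-patterns appearing in `c` : restrictions of translates of `c` to `D`. -/
def patterns {A : Type*} (c : ℤ × ℤ → A) (D : Set (ℤ × ℤ)) : Set (D → A) :=
  { p | ∃ t : ℤ × ℤ, ∀ x : D, p x = Translate t c x }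

/-- A configuration is periodic if it is fixed by some non-trivial translation. -/
def Periodic {A : Type*} (c : ℤ × ℤ → A) : Prop :=
  ∃ t : ℤ × ℤ, t ≠ 0 ∧ Translate t c = c

/-- The discrete rectangle `{1,…,n} × {1,…,m}`. -/
def rect (n m : ℕ) : Set (ℤ × ℤ) :=
  { x | 1 ≤ x.1 ∧ x.1 ≤ (n : ℤ) ∧ 1 ≤ x.2 ∧ x.2 ≤ (m : ℤ) }

/-- A Laurent polynomial `f` (a finitely supported `ℤ`-valued function on `ℤ²`)
annihilates the configuration `c` if all the coefficients of the formal product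
`f · c` vanish. -/
def Annihilates (f : (ℤ × ℤ) →₀ ℤ) (c : ℤ × ℤ → ℤ) : Prop :=
  ∀ n : ℤ × ℤ, ∑ t ∈ f.support, f t * c (n - t) = 0

open Filter Topology Set
open scoped Pointwise

theorem IsCompact.exists_minimal_invariant {X ι : Type*} [TopologicalSpace X] {K : Set X}
    (hK : IsCompact K) (hKcl : IsClosed K) (hKne : K.Nonempty) {T : ι → X → X}
    (hT : ∀ i, MapsTo (T i) K K) :
    ∃ Z ⊆ K, Z.Nonempty ∧ IsClosed Z ∧ (∀ i, MapsTo (T i) Z Z) ∧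
      ∀ Z' ⊆ Z, Z'.Nonempty → IsClosed Z' → (∀ i, MapsTo (T i) Z' Z') → Z' = Z := by
  let S : Set (Set X) := {Z | Z ⊆ K ∧ Z.Nonempty ∧ IsClosed Z ∧ ∀ i, MapsTo (T i) Z Z}
  have hchain : ∀ C ⊆ S, IsChain (· ⊆ ·) C → C.Nonempty → ∃ lb ∈ S, ∀ Z ∈ C, lb ⊆ Z := by
    rintro C hCS hC ⟨Z₀, hZ₀⟩
    have : Nonempty C := ⟨⟨Z₀, hZ₀⟩⟩
    refine ⟨⋂₀ C, ⟨(sInter_subset_of_mem hZ₀).trans (hCS hZ₀).1, ?_, ?_, ?_⟩,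
      fun Z hZ => sInter_subset_of_mem hZ⟩
    · exact IsCompact.nonempty_sInter_of_directed_nonempty_isCompact_isClosed
        (IsChain.directedOn hC.symm) (fun Z hZ => (hCS hZ).2.1)
        (fun Z hZ => hK.of_isClosed_subset (hCS hZ).2.2.1 (hCS hZ).1) fun Z hZ => (hCS hZ).2.2.1
    · exact isClosed_sInter fun Z hZ => (hCS hZ).2.2.1
    · exact fun i x hx => mem_sInter.2 fun Z hZ => (hCS hZ).2.2.2 i (hx Z hZ)
  obtain ⟨Z, -, hZ⟩ := zorn_superset_nonempty S hchain K ⟨subset_rfl, hKne, hKcl, hT⟩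
  obtain ⟨hZK, hZne, hZcl, hZT⟩ := hZ.prop
  exact ⟨Z, hZK, hZne, hZcl, hZT, fun Z' hZ'Z hne hcl hT' =>
    (hZ.eq_of_ge ⟨hZ'Z.trans hZK, hne, hcl, hT'⟩ hZ'Z).symm⟩

theorem tendsto_nhds_iff_eventually_eq {ι X α : Type*} [TopologicalSpace α] [DiscreteTopology α]
    {l : Filter ι} {F : ι → X → α} {y : X → α} :
    Tendsto F l (𝓝 y) ↔ ∀ x, ∀ᶠ i in l, F i x = y x := by
  simp only [tendsto_pi_nhds, nhds_discrete, tendsto_pure]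

theorem IsCompact.exists_tendsto_ultrafilter {ι X : Type*} [TopologicalSpace X] {K : Set X}
    (hK : IsCompact K) (U : Ultrafilter ι) {F : ι → X} (hF : ∀ i, F i ∈ K) :
    ∃ y ∈ K, Tendsto F U (𝓝 y) :=
  hK.ultrafilter_le_nhds (U.map F) (le_principal_iff.2 (Ultrafilter.mem_map.2 (univ_mem' hF)))

namespace Subshift

section Orbits

variable {α : Type*}

theorem translate_translate (s t : ℤ × ℤ) (d : ℤ × ℤ → α) :
    Translate s (Translate t d) = Translate (s + t) d := by
  funext n; simp [Translate, sub_sub]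

theorem orbit_eq_range (c : ℤ × ℤ → α) : orbit c = range fun t => Translate t c :=
  Set.ext fun _ => exists_congr fun _ => eq_comm

variable [TopologicalSpace α]

theorem continuous_translate (t : ℤ × ℤ) : Continuous (Translate (A := α) t) :=
  continuous_pi fun n => continuous_apply (n - t)

theorem self_mem_orbitClosure (c : ℤ × ℤ → α) : c ∈ orbitClosure c :=
  subset_closure ⟨0, by funext n; simp [Translate]⟩

theorem translate_mem_orbitClosure {c d : ℤ × ℤ → α} (t : ℤ × ℤ) (hd : d ∈ orbitClosure c) :
    Translate t d ∈ orbitClosure c :=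
  map_mem_closure (continuous_translate t) hd fun _ ⟨s, hs⟩ =>
    ⟨t + s, by rw [hs, translate_translate]⟩

theorem orbitClosure_subset {X : Set (ℤ × ℤ → α)} (hX : IsClosed X)
    (hXinv : ∀ t, MapsTo (Translate t) X X) {c : ℤ × ℤ → α} (hc : c ∈ X) : orbitClosure c ⊆ X :=
  closure_minimal (fun _ ⟨t, ht⟩ => ht ▸ hXinv t hc) hX

theorem exists_tendsto_translate_of_mem_orbitClosure {c d : ℤ × ℤ → α}
    (hd : d ∈ orbitClosure c) :
    ∃ U : Ultrafilter (ℤ × ℤ), Tendsto (fun t => Translate t c) U (𝓝 d) := by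
  rw [orbitClosure, orbit_eq_range, mem_closure_iff_clusterPt, ← map_top] at hd
  obtain ⟨U, -, hU⟩ := mapClusterPt_iff_ultrafilter.1 hd
  exact ⟨U, hU⟩

variable [DiscreteTopology α]

theorem apply_mem_range_of_mem_orbitClosure {c d : ℤ × ℤ → α} (hd : d ∈ orbitClosure c)
    (x : ℤ × ℤ) : d x ∈ range c := by
  have hsub : orbitClosure c ⊆ univ.pi fun _ => range c :=
    orbitClosure_subset (isClosed_set_pi fun _ _ => isClosed_discrete _)
      (fun t _ hd => mem_univ_pi.2 fun x => hd (x - t) trivial) fun x _ => ⟨x, rfl⟩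
  exact hsub hd x trivial

theorem isCompact_orbitClosure {c : ℤ × ℤ → α} (hfin : (range c).Finite) :
    IsCompact (orbitClosure c) :=
  (isCompact_univ_pi fun _ => hfin.isCompact).of_isClosed_subset isClosed_closure
    fun _ hd x _ => apply_mem_range_of_mem_orbitClosure hd x

theorem exists_minimal_subset_orbitClosure {c : ℤ × ℤ → α} (hfin : (range c).Finite) :
    ∃ Z ⊆ orbitClosure c, Z.Nonempty ∧ IsClosed Z ∧ (∀ t, MapsTo (Translate t) Z Z) ∧
      ∀ y ∈ Z, orbitClosure y = Z := by
  obtain ⟨Z, hZc, hZne, hZcl, hZT, hZmin⟩ := (isCompact_orbitClosure hfin).exists_minimal_invariant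
    isClosed_closure ⟨c, self_mem_orbitClosure c⟩ fun t _ hd => translate_mem_orbitClosure t hd
  exact ⟨Z, hZc, hZne, hZcl, hZT, fun y hy => hZmin _ (orbitClosure_subset hZcl hZT hy)
    ⟨y, self_mem_orbitClosure y⟩ isClosed_closure fun t _ hd => translate_mem_orbitClosure t hd⟩

end Orbits

section Annihilators

variable {f : (ℤ × ℤ) →₀ ℤ} {c d : ℤ × ℤ → ℤ}

theorem _root_.Annihilates.sub (hc : Annihilates f c) (hd : Annihilates f d) :
    Annihilates f (c - d) := fun n => by
  simp only [Pi.sub_apply, mul_sub, Finset.sum_sub_distrib, hc n, hd n, sub_zero]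

theorem _root_.Annihilates.translate (hc : Annihilates f c) (t : ℤ × ℤ) :
    Annihilates f (Translate t c) := fun n => by
  simpa only [Translate, sub_right_comm] using hc (n - t)

theorem _root_.Annihilates.of_mem_orbitClosure (hc : Annihilates f c) (hd : d ∈ orbitClosure c) :
    Annihilates f d := by
  have hclosed : IsClosed {d : ℤ × ℤ → ℤ | Annihilates f d} := by
    simp only [Annihilates, ofPred_forall]
    exact isClosed_iInter fun n => isClosed_eq (by fun_prop) continuous_const
  exact orbitClosure_subset hclosed (fun t _ hd => hd.translate t) hc hd

end Annihilators

section Recurrence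

variable {R : Type*} [Ring R]

def AnnihilatesSeq (g : ℤ →₀ R) (s : ℤ → R) : Prop :=
  ∀ n, ∑ j ∈ g.support, g j * s (n - j) = 0

variable {g : ℤ →₀ R} {s s' : ℤ → R}

theorem AnnihilatesSeq.sub (hs : AnnihilatesSeq g s) (hs' : AnnihilatesSeq g s') :
    AnnihilatesSeq g (s - s') := fun n => by
  simp only [Pi.sub_apply, mul_sub, Finset.sum_sub_distrib, hs n, hs' n, sub_zero]

theorem AnnihilatesSeq.comp_add_right (hs : AnnihilatesSeq g s) (k : ℤ) :
    AnnihilatesSeq g fun n => s (n + k) := fun n => by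
  simpa only [sub_add_eq_add_sub] using hs (n + k)

variable [NoZeroDivisors R]

theorem AnnihilatesSeq.eq_zero_of_eq_zero_below (hs : AnnihilatesSeq g s) {a W x : ℤ}
    (ha : g a ≠ 0) (hsupp : ∀ j ∈ g.support, a ≤ j ∧ j ≤ a + W)
    (hx : ∀ y, x - W ≤ y → y < x → s y = 0) : s x = 0 := by
  have key := hs (x + a)
  rw [Finset.sum_eq_single_of_mem a (Finsupp.mem_support_iff.2 ha) fun j hj hja => ?_] at key
  · simpa [ha] using key
  · obtain ⟨h₁, h₂⟩ := hsupp j hj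
    rw [hx _ (by omega) (by omega), mul_zero]

theorem AnnihilatesSeq.eq_zero_of_eq_zero_above (hs : AnnihilatesSeq g s) {a W x : ℤ}
    (hb : g (a + W) ≠ 0) (hsupp : ∀ j ∈ g.support, a ≤ j ∧ j ≤ a + W)
    (hx : ∀ y, x < y → y ≤ x + W → s y = 0) : s x = 0 := by
  have key := hs (x + (a + W))
  rw [Finset.sum_eq_single_of_mem _ (Finsupp.mem_support_iff.2 hb) fun j hj hja => ?_] at key
  · simpa [hb] using key
  · obtain ⟨h₁, h₂⟩ := hsupp j hj
    rw [hx _ (by omega) (by omega), mul_zero]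

theorem AnnihilatesSeq.exists_eq_zero_of_vanishes_on_window (hg : g ≠ 0) :
    ∃ W : ℕ, ∀ s, AnnihilatesSeq g s → ∀ n₀ : ℤ, (∀ n, n₀ ≤ n → n ≤ n₀ + W → s n = 0) → s = 0 := by
  have hne := Finsupp.support_nonempty_iff.2 hg
  set a := g.support.min' hne
  set b := g.support.max' hne
  have hab : a ≤ b := g.support.min'_le_max' hne
  have hsupp : ∀ j ∈ g.support, a ≤ j ∧ j ≤ a + (b - a) := fun j hj =>
    ⟨g.support.min'_le j hj, by simpa using g.support.le_max' j hj⟩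
  have ha : g a ≠ 0 := Finsupp.mem_support_iff.1 (g.support.min'_mem hne)
  have hb : g (a + (b - a)) ≠ 0 := by simpa using Finsupp.mem_support_iff.1 (g.support.max'_mem hne)
  refine ⟨(b - a).toNat, fun s hs n₀ hwin => ?_⟩
  have grow : ∀ k : ℕ, ∀ n, n₀ - k ≤ n → n ≤ n₀ + (b - a) + k → s n = 0 := by
    intro k
    induction k with
    | zero => exact fun n h₁ h₂ => hwin n (by omega) (by omega)
    | succ k ih =>
      intro n h₁ h₂
      by_cases hn : n₀ - k ≤ n ∧ n ≤ n₀ + (b - a) + k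
      · exact ih n hn.1 hn.2
      by_cases hup : n₀ + (b - a) + k < n
      · exact hs.eq_zero_of_eq_zero_below ha hsupp fun y _ _ => ih y (by omega) (by omega)
      · exact hs.eq_zero_of_eq_zero_above hb hsupp fun y _ _ => ih y (by omega) (by omega)
  exact funext fun n => grow (n - n₀).natAbs n (by omega) (by omega)

theorem AnnihilatesSeq.exists_common_period (hg : g ≠ 0) {S : Set R} (hS : S.Finite) :
    ∃ T : ℕ, 0 < T ∧ ∀ s, AnnihilatesSeq g s → (∀ n, s n ∈ S) → Function.Periodic s T := by
  obtain ⟨W, hW⟩ := exists_eq_zero_of_vanishes_on_window hg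
  set sols := {s | AnnihilatesSeq g s ∧ ∀ n, s n ∈ S}
  have hfin : sols.Finite := by
    refine Set.Finite.of_finite_image (f := fun s (i : Icc (0 : ℤ) W) => s i)
      ((Set.Finite.pi fun _ => hS).subset ?_) fun s hs s' hs' h => ?_
    · rintro _ ⟨s, hs, rfl⟩ i -
      exact hs.2 i
    · refine sub_eq_zero.1 (hW _ (hs.1.sub hs'.1) 0 fun n h₁ h₂ => ?_)
      exact sub_eq_zero.2 (congrFun h ⟨n, h₁, by simpa using h₂⟩)
  have hshift : ∀ k : ℕ, MapsTo (fun s n => s (n + k)) sols sols :=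
    fun k s hs => ⟨hs.1.comp_add_right k, fun n => hs.2 _⟩
  -- the shifts act on the finite set `sols`, so two different shifts agree on all of it
  have := hfin.to_subtype
  obtain ⟨a, b, hab, heq⟩ := Finite.exists_ne_map_eq_of_infinite fun k => (hshift k).restrict
  wlog hlt : a < b generalizing a b
  · exact this b a hab.symm heq.symm (by omega)
  refine ⟨b - a, by omega, fun s hs hsS n => ?_⟩
  have := congrFun (congrArg Subtype.val (congrFun heq ⟨s, hs, hsS⟩)) (n - a)
  simp only [MapsTo.val_restrict_apply] at this
  rw [Nat.cast_sub hlt.le]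
  convert this.symm using 2 <;> ring

end Recurrence

theorem eq_zero_of_forall_add_mul_mem {R : Type*} [Ring R] [NoZeroDivisors R] [CharZero R]
    {S : Set R} (hS : S.Finite) {a δ : R} (h : ∀ n : ℕ, a + n * δ ∈ S) : δ = 0 := by
  by_contra hδ
  refine Set.infinite_of_injective_forall_mem (fun m n hmn => ?_) h hS
  exact Nat.cast_injective (mul_right_cancel₀ hδ (add_left_cancel hmn))

theorem eq_of_periodic_increment {M : Type*} [AddCommGroup M] {w : M → ℤ} {S : Set ℤ}
    (hS : S.Finite) (hwS : ∀ x, w x ∈ S) {x v : M} {Λ : ℕ}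
    (hrow : Function.Periodic (fun k : ℤ => w (x + k • v + (Λ : ℤ) • v) - w (x + k • v)) Λ) :
    w (x + (Λ : ℤ) • v) = w x := by
  have hlin : ∀ n : ℕ, w (x + ((n : ℤ) * Λ) • v) = w x + n * (w (x + (Λ : ℤ) • v) - w x) := by
    intro n
    induction n with
    | zero => simp
    | succ n ih =>
      have := hrow.nat_mul_eq n
      simp only [zero_smul, add_zero] at this
      push_cast
      rw [add_mul, one_mul, add_smul, ← add_assoc]
      linear_combination this + ih
  exact sub_eq_zero.1 (eq_zero_of_forall_add_mul_mem hS fun n => hlin n ▸ hwS _)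

section Geometry

variable {u : ℤ × ℤ}

@[simp] theorem inner2_add_left (x y u : ℤ × ℤ) : inner2 (x + y) u = inner2 x u + inner2 y u := by
  simp only [inner2, Prod.fst_add, Prod.snd_add]; ring

@[simp] theorem inner2_sub_left (x y u : ℤ × ℤ) : inner2 (x - y) u = inner2 x u - inner2 y u := by
  simp only [inner2, Prod.fst_sub, Prod.snd_sub]; ring

@[simp] theorem inner2_smul_left (k : ℤ) (x u : ℤ × ℤ) : inner2 (k • x) u = k * inner2 x u := by
  simp only [inner2, Prod.smul_fst, Prod.smul_snd, smul_eq_mul]; ring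

@[simp] theorem inner2_neg_right (x u : ℤ × ℤ) : inner2 x (-u) = -inner2 x u := by
  simp only [inner2, Prod.fst_neg, Prod.snd_neg]; ring

theorem fst_ne_zero_or_snd_ne_zero (hu : u ≠ 0) : u.1 ≠ 0 ∨ u.2 ≠ 0 := by
  by_contra! h
  exact hu (Prod.ext h.1 h.2)

theorem inner2_self_pos (hu : u ≠ 0) : 0 < inner2 u u := by
  simp only [inner2]
  rcases fst_ne_zero_or_snd_ne_zero hu with h | h
  · nlinarith [mul_self_pos.2 h, mul_self_nonneg u.2]
  · nlinarith [mul_self_pos.2 h, mul_self_nonneg u.1]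

def orthVec (u : ℤ × ℤ) : ℤ × ℤ := (-(u.2 / u.1.gcd u.2), u.1 / u.1.gcd u.2)

def bezoutVec (u : ℤ × ℤ) : ℤ × ℤ := (u.1.gcdA u.2, u.1.gcdB u.2)

@[simp] theorem inner2_orthVec : inner2 (orthVec u) u = 0 := by
  have h₁ := Int.ediv_mul_cancel (Int.gcd_dvd_left u.1 u.2)
  have h₂ := Int.ediv_mul_cancel (Int.gcd_dvd_right u.1 u.2)
  simp only [inner2, orthVec]
  linear_combination (u.2 / u.1.gcd u.2) * h₁ - (u.1 / u.1.gcd u.2) * h₂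

theorem inner2_bezoutVec : inner2 (bezoutVec u) u = (u.1.gcd u.2 : ℤ) := by
  simp only [inner2, bezoutVec, Int.gcd_eq_gcd_ab]; ring

theorem gcd_fst_snd_pos (hu : u ≠ 0) : 0 < u.1.gcd u.2 :=
  Int.gcd_pos_iff.2 (fst_ne_zero_or_snd_ne_zero hu)

theorem exists_eq_smul_orthVec (hu : u ≠ 0) {z : ℤ × ℤ} (hz : inner2 z u = 0) :
    ∃ k : ℤ, z = k • orthVec u := by
  set g : ℤ := ↑(u.1.gcd u.2)
  set a := u.1 / g
  set b := u.2 / g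
  have h₁ : a * g = u.1 := Int.ediv_mul_cancel (Int.gcd_dvd_left u.1 u.2)
  have h₂ : b * g = u.2 := Int.ediv_mul_cancel (Int.gcd_dvd_right u.1 u.2)
  have hzab : z.1 * a + z.2 * b = 0 := by
    refine mul_right_cancel₀ (b := g) (by have := gcd_fst_snd_pos hu; omega) ?_
    simp only [inner2] at hz
    linear_combination hz + z.1 * h₁ + z.2 * h₂
  obtain ⟨α, β, hαβ⟩ : IsCoprime a b :=
    Int.isCoprime_iff_gcd_eq_one.2 (Int.gcd_div_gcd_div_gcd (gcd_fst_snd_pos hu))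
  refine ⟨α * z.2 - β * z.1, Prod.ext ?_ ?_⟩
  · simp only [orthVec, Prod.smul_fst, smul_eq_mul]
    linear_combination (-z.1) * hαβ + α * hzab
  · simp only [orthVec, Prod.smul_snd, smul_eq_mul]
    linear_combination (-z.2) * hαβ + β * hzab

theorem orthVec_ne_zero (hu : u ≠ 0) : orthVec u ≠ 0 := by
  intro h
  have h₁ := Int.ediv_mul_cancel (Int.gcd_dvd_left u.1 u.2)
  have h₂ := Int.ediv_mul_cancel (Int.gcd_dvd_right u.1 u.2)
  simp only [orthVec, Prod.ext_iff, Prod.fst_zero, Prod.snd_zero, neg_eq_zero] at h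
  rw [h.1, zero_mul] at h₂
  rw [h.2, zero_mul] at h₁
  exact hu (Prod.ext h₁.symm h₂.symm)

end Geometry

section HalfPlane

variable {u : ℤ × ℤ} {f : (ℤ × ℤ) →₀ ℤ} {w : ℤ × ℤ → ℤ}

theorem injective_add_smul (t₀ : ℤ × ℤ) {v : ℤ × ℤ} (hv : v ≠ 0) :
    Function.Injective fun j : ℤ => t₀ + j • v :=
  (add_right_injective t₀).comp (smul_left_injective ℤ hv)

noncomputable def lineCoeffs (f : (ℤ × ℤ) →₀ ℤ) (t₀ : ℤ × ℤ) {v : ℤ × ℤ} (hv : v ≠ 0) :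
    ℤ →₀ ℤ :=
  f.comapDomain (fun j => t₀ + j • v) (injective_add_smul t₀ hv).injOn

/-- Since `z` vanishes above the level of `x`, only the top face of `f` (its terms on the line
through `t₀` orthogonal to `u`) sees the line through `x`. -/
theorem _root_.Annihilates.annihilatesSeq_lineCoeffs {z : ℤ × ℤ → ℤ} (hz : Annihilates f z)
    (hu : u ≠ 0) {t₀ : ℤ × ℤ} (ht₀ : ∀ t ∈ f.support, inner2 t u ≤ inner2 t₀ u) {x : ℤ × ℤ}
    (habove : ∀ y, inner2 x u < inner2 y u → z y = 0) :
    AnnihilatesSeq (lineCoeffs f t₀ (orthVec_ne_zero hu)) fun k => z (x + k • orthVec u) := by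
  intro m
  have key := Finset.sum_preimage (fun j : ℤ => t₀ + j • orthVec u) f.support
    (injective_add_smul t₀ (orthVec_ne_zero hu)).injOn
    (fun t => f t * z (x + m • orthVec u + t₀ - t)) fun t ht hnot => ?_
  · rw [hz] at key
    rw [← key, lineCoeffs, Finsupp.comapDomain_support]
    refine Finset.sum_congr rfl fun j _ => ?_
    show f _ * z (x + (m - j) • orthVec u) = _
    rw [sub_smul]
    congr 2
    abel
  · have hlt : inner2 t u < inner2 t₀ u := by
      refine (ht₀ t ht).lt_of_ne fun heq => hnot ?_
      obtain ⟨k, hk⟩ := exists_eq_smul_orthVec hu (z := t - t₀) (by simp [heq])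
      exact ⟨k, show t₀ + k • orthVec u = t by rw [← hk]; abel⟩
    have hup : inner2 x u < inner2 (x + m • orthVec u + t₀ - t) u := by
      simp only [inner2_add_left, inner2_sub_left, inner2_smul_left, inner2_orthVec]
      omega
    rw [habove _ hup, mul_zero]

theorem _root_.Annihilates.exists_periodic_of_eq_zero_above (hw : Annihilates f w) (hf : f ≠ 0)
    (hu : u ≠ 0) {S : Set ℤ} (hS : S.Finite) (hwS : ∀ x, w x ∈ S) {ℓ₀ : ℤ}
    (habove : ∀ x, ℓ₀ < inner2 x u → w x = 0) :
    ∃ Λ : ℕ, 0 < Λ ∧ Function.Periodic w ((Λ : ℤ) • orthVec u) := by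
  obtain ⟨t₀, ht₀, hmax⟩ :=
    f.support.exists_max_image (inner2 · u) (Finsupp.support_nonempty_iff.2 hf)
  have hp : lineCoeffs f t₀ (orthVec_ne_zero hu) ≠ 0 := fun h =>
    Finsupp.mem_support_iff.1 ht₀ (by simpa [lineCoeffs] using DFunLike.congr_fun h 0)
  obtain ⟨Λ, hΛ, hper⟩ := AnnihilatesSeq.exists_common_period hp (hS.sub hS)
  refine ⟨Λ, hΛ, fun x => sub_eq_zero.1 ?_⟩
  set v := orthVec u
  set D : ℤ × ℤ → ℤ := fun x => w (x + (Λ : ℤ) • v) - w x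
  have hD : Annihilates f D := by
    have : D = Translate (-((Λ : ℤ) • v)) w - w := by
      funext x
      simp only [D, Translate, Pi.sub_apply, sub_neg_eq_add]
    exact this ▸ (hw.translate _).sub hw
  -- on the highest line where `D ≠ 0`, `D` satisfies the recurrence of the top face of `f`, so it
  -- is `Λ`-periodic along that line; then `w` grows linearly there, impossible for finite values
  have step : ∀ L, (∀ y, L < inner2 y u → D y = 0) → ∀ y, inner2 y u = L → D y = 0 := by
    rintro L hL y rfl
    exact sub_eq_zero.2 (eq_of_periodic_increment hS hwS
      (hper _ (hD.annihilatesSeq_lineCoeffs hu hmax hL) fun k => Set.sub_mem_sub (hwS _) (hwS _)))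
  have hdown : ∀ k : ℕ, ∀ y, ℓ₀ - k < inner2 y u → D y = 0 := by
    intro k
    induction k with
    | zero =>
      intro y hy
      rw [Nat.cast_zero, sub_zero] at hy
      have hy' : ℓ₀ < inner2 (y + (Λ : ℤ) • v) u := by
        simpa only [inner2_add_left, inner2_smul_left, inner2_orthVec, v, mul_zero, add_zero]
          using hy
      simp only [D, habove y hy, habove _ hy', sub_zero]
    | succ k ih =>
      intro y hy
      rcases lt_or_eq_of_le (show ℓ₀ - k ≤ inner2 y u by push_cast at hy; omega) with h | h
      · exact ih y h
      · exact step _ ih y h.symm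
  exact hdown (ℓ₀ - inner2 x u + 1).toNat x (by omega)

end HalfPlane

section Gaps

variable {α : Type*} {Y : Set (ℤ × ℤ → α)} {u : ℤ × ℤ}

def HasBoundedGaps (Y : Set (ℤ × ℤ → α)) (u : ℤ × ℤ) (G : ℕ) : Prop :=
  ∀ d ∈ Y, ∀ e ∈ Y, ∀ x, d x ≠ e x →
    ∃ y, d y ≠ e y ∧ inner2 x u - G ≤ inner2 y u ∧ inner2 y u < inner2 x u

theorem _root_.DeterministicIn.exists_hasBoundedGaps [TopologicalSpace α] [DiscreteTopology α]
    (hdet : DeterministicIn Y u) (hY : IsCompact Y) (hYinv : ∀ t, MapsTo (Translate t) Y Y) :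
    ∃ G, HasBoundedGaps Y u G := by
  by_contra! h
  simp only [HasBoundedGaps, not_forall, not_exists, not_and, not_lt] at h
  choose d hd e he x hx hgap using h
  -- recentre the `G`-th counterexample at the origin and pass to a limit
  let U : Ultrafilter ℕ := Ultrafilter.of atTop
  have hU : ∀ k : ℕ, ∀ᶠ G in U, k ≤ G := fun k => Ultrafilter.of_le atTop (eventually_ge_atTop k)
  obtain ⟨d', hd'Y, hd'⟩ := hY.exists_tendsto_ultrafilter U fun G => hYinv (-x G) (hd G)
  obtain ⟨e', he'Y, he'⟩ := hY.exists_tendsto_ultrafilter U fun G => hYinv (-x G) (he G)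
  rw [tendsto_nhds_iff_eventually_eq] at hd' he'
  have heq : d' = e' := by
    refine hdet d' hd'Y e' he'Y fun n (hn : inner2 n u < 0) => ?_
    obtain ⟨G, hG, hdG, heG⟩ := ((hU (-inner2 n u).toNat).and ((hd' n).and (he' n))).exists
    rw [← hdG, ← heG]
    by_contra hne
    have := hgap G (n - -x G) hne
    simp only [sub_neg_eq_add, inner2_add_left] at this
    omega
  obtain ⟨G, hdG, heG⟩ := ((hd' 0).and (he' 0)).exists
  exact hx G (by simpa [Translate, heq, ← heG] using hdG)

theorem HasBoundedGaps.exists_ne_in_slab {G : ℕ} (hgap : HasBoundedGaps Y u G) {d e} (hd : d ∈ Y)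
    (he : e ∈ Y) {x : ℤ × ℤ} (hx : d x ≠ e x) {ℓ : ℤ} (hℓ : ℓ ≤ inner2 x u) :
    ∃ y, d y ≠ e y ∧ ℓ ≤ inner2 y u ∧ inner2 y u ≤ ℓ + G := by
  obtain ⟨_, ⟨hℓy, y, hy, rfl⟩, hmin⟩ :=
    Int.exists_least_of_bdd (P := fun k => ℓ ≤ k ∧ ∃ y, d y ≠ e y ∧ inner2 y u = k)
      ⟨ℓ, fun _ h => h.1⟩ ⟨_, hℓ, x, hx, rfl⟩
  refine ⟨y, hy, hℓy, not_lt.1 fun hlt => ?_⟩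
  obtain ⟨y', hy', h₁, h₂⟩ := hgap d hd e he y hy
  exact h₂.not_ge (hmin _ ⟨by omega, y', hy', rfl⟩)

end Gaps

section Slabs

variable {u : ℤ × ℤ} {Λ G : ℕ} {ℓ : ℤ}

def DiffersInEverySlab {α : Type*} (u : ℤ × ℤ) (G : ℕ) (d e : ℤ × ℤ → α) : Prop :=
  ∀ ℓ : ℤ, ∃ x, d x ≠ e x ∧ ℓ ≤ inner2 x u ∧ inner2 x u ≤ ℓ + G

theorem DiffersInEverySlab.translate {α : Type*} {d e : ℤ × ℤ → α}
    (h : DiffersInEverySlab u G d e) (t : ℤ × ℤ) :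
    DiffersInEverySlab u G (Translate t d) (Translate t e) := fun ℓ => by
  obtain ⟨x, hx, h₁, h₂⟩ := h (ℓ - inner2 t u)
  exact ⟨x + t, by simpa [Translate] using hx, by simp; omega, by simp; omega⟩

/-- Representatives, modulo `Λ • orthVec u`, of the points of the slab `ℓ ≤ ⟪x, u⟫ ≤ ℓ + G`. -/
noncomputable def slabReps (u : ℤ × ℤ) (Λ G : ℕ) (ℓ : ℤ) : Finset (ℤ × ℤ) :=
  (Finset.Icc (-(|ℓ| + G)) (|ℓ| + G) ×ˢ Finset.range Λ).image
    fun q => q.1 • bezoutVec u + (q.2 : ℤ) • orthVec u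

theorem exists_add_smul_mem_slabReps (hu : u ≠ 0) (hΛ : 0 < Λ) {x : ℤ × ℤ}
    (h₁ : ℓ ≤ inner2 x u) (h₂ : inner2 x u ≤ ℓ + G) :
    ∃ k : ℤ, x + k • ((Λ : ℤ) • orthVec u) ∈ slabReps u Λ G ℓ := by
  set g : ℤ := ↑(u.1.gcd u.2)
  have hg : 0 < g := by simpa [g] using gcd_fst_snd_pos hu
  obtain ⟨m, hm⟩ : g ∣ inner2 x u :=
    dvd_add (dvd_mul_of_dvd_right (Int.gcd_dvd_left _ _) _)
      (dvd_mul_of_dvd_right (Int.gcd_dvd_right _ _) _)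
  obtain ⟨j, hj⟩ := exists_eq_smul_orthVec hu (z := x - m • bezoutVec u)
    (by rw [inner2_sub_left, inner2_smul_left, inner2_bezoutVec, hm]; ring)
  have hmb : |m| ≤ |ℓ| + G := by
    have : |m| ≤ |inner2 x u| := by
      rw [hm, abs_mul, abs_of_pos hg]
      nlinarith [abs_nonneg m]
    exact this.trans (abs_le.2 ⟨by linarith [neg_abs_le ℓ], by linarith [le_abs_self ℓ]⟩)
  refine ⟨-(j / Λ), Finset.mem_image.2 ⟨(m, (j % Λ).toNat), ?_, ?_⟩⟩
  · simp only [Finset.mem_product, Finset.mem_Icc, Finset.mem_range]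
    have := Int.emod_lt_of_pos j (show (0 : ℤ) < Λ by omega)
    exact ⟨abs_le.1 hmb, by omega⟩
  · have hx : x = m • bezoutVec u + j • orthVec u := by rw [← hj]; abel
    have hr : ((j % Λ).toNat : ℤ) = j - Λ * (j / Λ) := by
      rw [Int.toNat_of_nonneg (Int.emod_nonneg _ (by omega)), Int.emod_def]
    simp only [hr, hx, smul_smul, sub_smul]
    rw [neg_mul, neg_smul, mul_comm]
    abel

theorem exists_ne_mem_slabReps (hu : u ≠ 0) (hΛ : 0 < Λ) {d e : ℤ × ℤ → ℤ}
    (hper : Function.Periodic (d - e) ((Λ : ℤ) • orthVec u)) {x : ℤ × ℤ} (hx : d x ≠ e x)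
    (h₁ : ℓ ≤ inner2 x u) (h₂ : inner2 x u ≤ ℓ + G) :
    ∃ y ∈ slabReps u Λ G ℓ, d y ≠ e y ∧ ℓ ≤ inner2 y u ∧ inner2 y u ≤ ℓ + G := by
  obtain ⟨k, hk⟩ := exists_add_smul_mem_slabReps hu hΛ h₁ h₂
  have hlevel : inner2 (x + k • ((Λ : ℤ) • orthVec u)) u = inner2 x u := by
    simp only [inner2_add_left, inner2_smul_left, inner2_orthVec, mul_zero, add_zero]
  refine ⟨_, hk, fun h => hx (sub_eq_zero.1 ?_), hlevel ▸ h₁, hlevel ▸ h₂⟩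
  have := hper.zsmul k x
  simp only [Pi.sub_apply, h, sub_self] at this
  exact this.symm

end Slabs

section Families

variable {Y : Set (ℤ × ℤ → ℤ)} {u : ℤ × ℤ} {Λ G n : ℕ}

structure IsSeparatedFamily (Y : Set (ℤ × ℤ → ℤ)) (u : ℤ × ℤ) (Λ G : ℕ) {n : ℕ}
    (g : Fin n → ℤ × ℤ → ℤ) : Prop where
  mem : ∀ i, g i ∈ Y
  periodic : ∀ i j, Function.Periodic (g i - g j) ((Λ : ℤ) • orthVec u)
  differs : Pairwise fun i j => DiffersInEverySlab u G (g i) (g j)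

theorem isSeparatedFamily_const {d : ℤ × ℤ → ℤ} (hd : d ∈ Y) :
    IsSeparatedFamily Y u Λ G fun _ : Fin 1 => d :=
  ⟨fun _ => hd, fun _ _ x => by simp, fun i j hij => absurd (Subsingleton.elim i j) hij⟩

theorem IsSeparatedFamily.injective {g : Fin n → ℤ × ℤ → ℤ} (hg : IsSeparatedFamily Y u Λ G g) :
    Function.Injective g :=
  fun i j hij => by_contra fun hne => by
    obtain ⟨x, hx, -⟩ := hg.differs hne 0
    exact hx (congrFun hij x)

theorem IsSeparatedFamily.card_le {g : Fin n → ℤ × ℤ → ℤ} (hg : IsSeparatedFamily Y u Λ G g)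
    (hu : u ≠ 0) (hΛ : 0 < Λ) {A : Set ℤ} (hA : A.Finite) (hYA : ∀ d ∈ Y, ∀ x, d x ∈ A) :
    n ≤ Nat.card (slabReps u Λ G 0 → A) := by
  have := hA.to_subtype
  let code (i : Fin n) (x : slabReps u Λ G 0) : A := ⟨g i x, hYA _ (hg.mem i) x⟩
  have hcode : Function.Injective code := fun i j hij => by
    by_contra hne
    obtain ⟨x, hx, h₁, h₂⟩ := hg.differs hne 0
    obtain ⟨y, hy, hne', -⟩ := exists_ne_mem_slabReps hu hΛ (hg.periodic i j) hx h₁ h₂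
    exact hne' (congrArg Subtype.val (congrFun hij ⟨y, hy⟩))
  simpa using Nat.card_le_card_of_injective code hcode

theorem exists_isSeparatedFamily_maximal (hu : u ≠ 0) (hΛ : 0 < Λ) {A : Set ℤ} (hA : A.Finite)
    (hYA : ∀ d ∈ Y, ∀ x, d x ∈ A) {d : ℤ × ℤ → ℤ} (hd : d ∈ Y) :
    ∃ n, ∃ g : Fin (n + 1) → ℤ × ℤ → ℤ, IsSeparatedFamily Y u Λ G g ∧
      ∀ m (g' : Fin m → ℤ × ℤ → ℤ), IsSeparatedFamily Y u Λ G g' → m ≤ n + 1 := by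
  classical
  let P m := ∃ g : Fin m → ℤ × ℤ → ℤ, IsSeparatedFamily Y u Λ G g
  set B := Nat.card (slabReps u Λ G 0 → A)
  have hle : ∀ m, P m → m ≤ Nat.findGreatest P B := fun m ⟨g, hg⟩ =>
    Nat.le_findGreatest (hg.card_le hu hΛ hA hYA) ⟨g, hg⟩
  have h1 := hle 1 ⟨_, isSeparatedFamily_const hd⟩
  obtain ⟨n, hn⟩ := Nat.exists_eq_add_of_le' h1
  obtain ⟨g, hg⟩ : P (n + 1) :=
    hn ▸ Nat.findGreatest_spec (h1.trans (Nat.findGreatest_le B)) ⟨_, isSeparatedFamily_const hd⟩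
  exact ⟨n, g, hg, fun m g' hg' => hn ▸ hle m ⟨g', hg'⟩⟩

theorem exists_isSeparatedFamily_tendsto (hY : IsCompact Y)
    (hYinv : ∀ t, MapsTo (Translate t) Y Y) (hu : u ≠ 0) (hΛ : 0 < Λ)
    {g : Fin n → ℤ × ℤ → ℤ} (hgY : ∀ i, g i ∈ Y)
    (hper : ∀ i j, Function.Periodic (g i - g j) ((Λ : ℤ) • orthVec u))
    {ι : Type*} (U : Ultrafilter ι) (t : ι → ℤ × ℤ)
    (hsep : ∀ i j, i ≠ j → ∀ ℓ, ∀ᶠ m in U, ∃ x, Translate (t m) (g i) x ≠ Translate (t m) (g j) x ∧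
      ℓ ≤ inner2 x u ∧ inner2 x u ≤ ℓ + G) :
    ∃ g' : Fin n → ℤ × ℤ → ℤ, IsSeparatedFamily Y u Λ G g' ∧
      ∀ i, Tendsto (fun m => Translate (t m) (g i)) U (𝓝 (g' i)) := by
  choose g' hg'Y hg' using fun i => hY.exists_tendsto_ultrafilter U fun m => hYinv (t m) (hgY i)
  have hper' : ∀ i j m, Function.Periodic (Translate (t m) (g i) - Translate (t m) (g j))
      ((Λ : ℤ) • orthVec u) := fun i j m => (hper i j).sub_const (t m)
  refine ⟨g', ⟨hg'Y, fun i j => ?_, fun i j hij ℓ => ?_⟩, hg'⟩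
  · have hcl : IsClosed {h : ℤ × ℤ → ℤ | Function.Periodic h ((Λ : ℤ) • orthVec u)} := by
      simp only [Function.Periodic, ofPred_forall]
      exact isClosed_iInter fun x => isClosed_eq (continuous_apply _) (continuous_apply _)
    exact hcl.mem_of_tendsto ((hg' i).sub (hg' j)) (Eventually.of_forall (hper' i j))
  · have hreps : ∀ᶠ m in U, ∃ y ∈ slabReps u Λ G ℓ,
        Translate (t m) (g i) y ≠ Translate (t m) (g j) y ∧ ℓ ≤ inner2 y u ∧ inner2 y u ≤ ℓ + G :=
      (hsep i j hij ℓ).mono fun m ⟨x, hx, h₁, h₂⟩ =>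
        exists_ne_mem_slabReps hu hΛ (hper' i j m) hx h₁ h₂
    obtain ⟨y, -, hy⟩ :=
      (Ultrafilter.eventually_exists_mem_iff (slabReps u Λ G ℓ).finite_toSet).1 hreps
    obtain ⟨m, ⟨hne, h₁, h₂⟩, hi, hj⟩ := (hy.and (((tendsto_nhds_iff_eventually_eq.1 (hg' i)) y).and
      ((tendsto_nhds_iff_eventually_eq.1 (hg' j)) y))).exists
    exact ⟨y, hi ▸ hj ▸ hne, h₁, h₂⟩

theorem IsSeparatedFamily.exists_eq_of_mem_orbitClosure {g : Fin n → ℤ × ℤ → ℤ}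
    (hg : IsSeparatedFamily Y u Λ G g) (hY : IsCompact Y) (hYinv : ∀ t, MapsTo (Translate t) Y Y)
    (hu : u ≠ 0) (hΛ : 0 < Λ) {i₀ : Fin n} {d : ℤ × ℤ → ℤ} (hd : d ∈ orbitClosure (g i₀)) :
    ∃ g' : Fin n → ℤ × ℤ → ℤ, IsSeparatedFamily Y u Λ G g' ∧ g' i₀ = d := by
  obtain ⟨U, hU⟩ := exists_tendsto_translate_of_mem_orbitClosure hd
  obtain ⟨g', hg', hlim⟩ := exists_isSeparatedFamily_tendsto hY hYinv hu hΛ hg.mem hg.periodic U id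
    fun i j hij ℓ => Eventually.of_forall fun t => (hg.differs hij).translate t ℓ
  exact ⟨g', hg', tendsto_nhds_unique (hlim i₀) hU⟩

/-- Pushing a family of distinct points upwards spreads their differences over every slab. -/
theorem HasBoundedGaps.exists_isSeparatedFamily (hgap : HasBoundedGaps Y u G) (hY : IsCompact Y)
    (hYinv : ∀ t, MapsTo (Translate t) Y Y) (hu : u ≠ 0) (hΛ : 0 < Λ)
    {g : Fin n → ℤ × ℤ → ℤ} (hgY : ∀ i, g i ∈ Y)
    (hper : ∀ i j, Function.Periodic (g i - g j) ((Λ : ℤ) • orthVec u))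
    (hinj : Function.Injective g) :
    ∃ g' : Fin n → ℤ × ℤ → ℤ, IsSeparatedFamily Y u Λ G g' := by
  let U : Ultrafilter ℕ := Ultrafilter.of atTop
  have hU : ∀ k : ℕ, ∀ᶠ m in U, k ≤ m := fun k => Ultrafilter.of_le atTop (eventually_ge_atTop k)
  have hpos := inner2_self_pos hu
  have hsep : ∀ i j, i ≠ j → ∀ ℓ, ∀ᶠ m : ℕ in U, ∃ x,
      Translate ((m : ℤ) • u) (g i) x ≠ Translate ((m : ℤ) • u) (g j) x ∧
        ℓ ≤ inner2 x u ∧ inner2 x u ≤ ℓ + G := by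
    intro i j hij ℓ
    obtain ⟨x₀, hx₀⟩ := Function.ne_iff.1 (hinj.ne hij)
    refine (hU (ℓ - inner2 x₀ u).toNat).mono fun m hm => ?_
    obtain ⟨y, hy, h₁, h₂⟩ := hgap.exists_ne_in_slab (hgY i) (hgY j) hx₀
      (ℓ := ℓ - m * inner2 u u) (by nlinarith [Int.self_le_toNat (ℓ - inner2 x₀ u)])
    refine ⟨y + (m : ℤ) • u, by simpa [Translate] using hy, ?_, ?_⟩ <;>
      simp only [inner2_add_left, inner2_smul_left] <;> omega
  obtain ⟨g', hg', -⟩ := exists_isSeparatedFamily_tendsto hY hYinv hu hΛ hgY hper _ _ hsep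
  exact ⟨g', hg'⟩

end Families

theorem _root_.DeterministicIn.neg {Y : Set (ℤ × ℤ → ℤ)} {u : ℤ × ℤ} (hdet : DeterministicIn Y u)
    (hu : u ≠ 0) (hY : IsCompact Y) (hYinv : ∀ t, MapsTo (Translate t) Y Y)
    (hYmin : ∀ y ∈ Y, Y ⊆ orbitClosure y) {A : Set ℤ} (hA : A.Finite)
    (hYA : ∀ d ∈ Y, ∀ x, d x ∈ A) {f : (ℤ × ℤ) →₀ ℤ} (hf : f ≠ 0)
    (hYf : ∀ d ∈ Y, Annihilates f d) :
    DeterministicIn Y (-u) := by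
  intro d hd e he hde
  by_contra hne
  have habove : ∀ x, 0 < inner2 x u → (d - e) x = 0 := fun x hx =>
    sub_eq_zero.2 (hde (show inner2 x (-u) < 0 by simpa using hx))
  obtain ⟨Λ, hΛ, hper⟩ := ((hYf d hd).sub (hYf e he)).exists_periodic_of_eq_zero_above hf hu
    (hA.sub hA) (fun x => Set.sub_mem_sub (hYA d hd x) (hYA e he x)) habove
  obtain ⟨G, hgap⟩ := hdet.exists_hasBoundedGaps hY hYinv
  obtain ⟨n, g, hg, hmax⟩ := exists_isSeparatedFamily_maximal (G := G) hu hΛ hA hYA hd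
  obtain ⟨g', hg', hg'0⟩ :=
    hg.exists_eq_of_mem_orbitClosure hY hYinv hu hΛ (i₀ := 0) (hYmin _ (hg.mem 0) hd)
  have hg'e : ∀ i, g' i ≠ e := by
    intro i hi
    rcases eq_or_ne i 0 with rfl | hi0
    · exact hne (hg'0 ▸ hi)
    · obtain ⟨x, hx, h₁, -⟩ := hg'.differs hi0 1
      exact hx (by rw [hi, hg'0, sub_eq_zero.1 (habove x (by omega))])
  have hper' : ∀ i, Function.Periodic (Fin.cons e g' i - e) ((Λ : ℤ) • orthVec u) := by
    refine Fin.cases (fun x => by simp) fun i => ?_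
    simpa [← hg'0] using (hg'.periodic i 0).add hper
  obtain ⟨g'', hg''⟩ := hgap.exists_isSeparatedFamily hY hYinv hu hΛ
    (Fin.cases he hg'.mem) (fun i j => by simpa using (hper' i).sub (hper' j))
    (Fin.cons_injective_iff.2 ⟨fun ⟨i, hi⟩ => hg'e i hi, hg'.injective⟩)
  exact absurd (hmax _ g'' hg'') (by omega)

end Subshift

/-- If a two-dimensional configuration over a finite alphabet of
integers has a non-trivial annihilator, then its orbit closure contains a
configuration `c'` such that the orbit closure of `c'` has no one-sided direction
of determinism. -/
theorem no_one_sided_determinism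
    (c : ℤ × ℤ → ℤ) (hfin : (Set.range c).Finite)
    (f : (ℤ × ℤ) →₀ ℤ) (hf : f ≠ 0) (hann : Annihilates f c) :
    ∃ c' ∈ orbitClosure c, ∀ u : ℤ × ℤ, u ≠ 0 →
      (DeterministicIn (orbitClosure c') u ↔ DeterministicIn (orbitClosure c') (-u)) := by
  obtain ⟨Z, hZc, ⟨c', hc'⟩, hZcl, hZinv, hZmin⟩ := Subshift.exists_minimal_subset_orbitClosure hfin
  have hZ : IsCompact Z := (Subshift.isCompact_orbitClosure hfin).of_isClosed_subset hZcl hZc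
  have key : ∀ u ≠ 0, DeterministicIn Z u → DeterministicIn Z (-u) := fun u hu hdet =>
    hdet.neg hu hZ hZinv (fun y hy => (hZmin y hy).ge) hfin
      (fun d hd => Subshift.apply_mem_range_of_mem_orbitClosure (hZc hd)) hf
      fun d hd => hann.of_mem_orbitClosure (hZc hd)
  refine ⟨c', hZc hc', fun u hu => ?_⟩
  rw [hZmin c' hc']
  exact ⟨key u hu, fun h => neg_neg u ▸ key (-u) (neg_ne_zero.2 hu) h⟩
end

section
/- Let c : ℤ² → ℤ be a configuration taking only finitely many values. If c has low complexity with respect to some finite non-empty set D ⊂ ℤ², then there exists a non-trivial Laurent polynomial annihilating c. -/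
/-! Extend every `D`-pattern of `c` by a constant coordinate `1`. These are at most `|D|` vectors
in `ℤ^(D ⊔ {*})`, which has rank `|D| + 1`, so they have a common nonzero orthogonal integer
vector `(a₀, a)`, and `a ≠ 0` since otherwise `a₀ = 0` too. Thus every `t` satisfies
`a₀ + ∑_d a_d c(d - t) = 0`, so `f = ∑_d a_d X^(-d)` is nonzero with `f · c` constant, and
`(1 - X^(1,0)) f` annihilates `c`. -/

theorem exists_affine_relation_of_ncard_le {R ι : Type*} [Ring R] [StrongRankCondition R]
    [Fintype ι] {S : Set (ι → R)} (hS : S.Finite) (hne : S.Nonempty)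
    (hcard : S.ncard ≤ Fintype.card ι) :
    ∃ (a₀ : R) (a : ι → R), a ≠ 0 ∧ ∀ p ∈ S, a₀ + ∑ i, a i * p i = 0 := by
  have := hS.fintype
  let column : Option ι → S → R := fun i p => i.elim 1 fun j => p.1 j
  have hdep : ¬ LinearIndependent R column := fun h => by
    have := h.fintype_card_le_finrank
    rw [Module.finrank_fintype_fun_eq_card, Fintype.card_option,
      ← Nat.card_eq_fintype_card (α := S), Nat.card_coe_set_eq] at this
    omega
  obtain ⟨g, hg, i, hi⟩ := Fintype.not_linearIndependent_iff.mp hdep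
  have hrel : ∀ p ∈ S, g none + ∑ j, g (some j) * p j = 0 := fun p hp => by
    simpa [column, Fintype.sum_option] using congrFun hg ⟨p, hp⟩
  refine ⟨g none, g ∘ some, fun h => hi ?_, hrel⟩
  obtain ⟨p, hp⟩ := hne
  have h0 : g none = 0 := by simpa [show ∀ j, g (some j) = 0 from congrFun h] using hrel p hp
  cases i with
  | none => exact h0
  | some j => exact congrFun h j

section Patterns

variable {A : Type*} {D : Set (ℤ × ℤ)}

theorem restrict_translate_mem_patterns (c : ℤ × ℤ → A) (t : ℤ × ℤ) :
    (fun x : D => c (x - t)) ∈ patterns c D :=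
  ⟨t, fun _ => rfl⟩

theorem patterns_finite {c : ℤ × ℤ → A} (hc : (Set.range c).Finite) (hD : D.Finite) :
    (patterns c D).Finite := by
  have : Finite D := hD
  refine (Set.Finite.pi fun _ : D => hc).subset ?_
  rintro p ⟨t, ht⟩ x -
  exact ht x ▸ Set.mem_range_self _

end Patterns

section Convolution

variable {G R : Type*} [AddCommGroup G] [Ring R]

/-- `convolve c n f` is the coefficient of `X^n` in the formal product `f · c`. -/
noncomputable def convolve (c : G → R) (n : G) : (G →₀ R) →+ R :=
  Finsupp.liftAddHom fun t => AddMonoidHom.mulRight (c (n - t))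

theorem convolve_apply (c : G → R) (n : G) (f : G →₀ R) :
    convolve c n f = f.sum fun t z => z * c (n - t) :=
  Finsupp.liftAddHom_apply _ _

theorem convolve_mapDomain (c : G → R) (n : G) {ι : Type*} (x : ι → G) (g : ι →₀ R) :
    convolve c n (g.mapDomain x) = g.sum fun i z => z * c (n - x i) :=
  Finsupp.sum_mapDomain_index_addMonoidHom _

theorem convolve_mapDomain_add (c : G → R) (n e : G) (f : G →₀ R) :
    convolve c n (f.mapDomain (· + e)) = convolve c (n - e) f := by
  rw [convolve_mapDomain, convolve_apply]
  simp only [sub_add_eq_sub_sub_swap]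

theorem convolve_sub_mapDomain_add_eq_zero {c : G → R} {f : G →₀ R} {k : R}
    (hf : ∀ n, convolve c n f = k) (n e : G) :
    convolve c n (f - f.mapDomain (· + e)) = 0 := by
  rw [map_sub, convolve_mapDomain_add, hf, hf, sub_self]

end Convolution

theorem annihilates_iff_convolve {f : (ℤ × ℤ) →₀ ℤ} {c : ℤ × ℤ → ℤ} :
    Annihilates f c ↔ ∀ n, convolve c n f = 0 := by
  simp only [Annihilates, convolve_apply, Finsupp.sum]

theorem Finsupp.mapDomain_add_ne_self {R : Type*} [AddCommMonoid R] {f : (ℤ × ℤ) →₀ R}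
    (hf : f ≠ 0) {e : ℤ × ℤ} (he : 0 < e.1) : f.mapDomain (· + e) ≠ f := by
  obtain ⟨t, ht, htmax⟩ :=
    f.support.exists_max_image (fun t => t.1) (Finsupp.support_nonempty_iff.mpr hf)
  intro h
  have hte : f (t + e) = 0 := by
    by_contra hne
    have := htmax _ (Finsupp.mem_support_iff.mpr hne)
    simp only [Prod.fst_add] at this
    omega
  rw [← h, Finsupp.mapDomain_apply (add_left_injective e)] at hte
  exact Finsupp.mem_support_iff.mp ht hte

theorem exists_annihilator_of_low_complexity_general
    (c : ℤ × ℤ → ℤ) (hfin : (Set.range c).Finite)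
    (D : Set (ℤ × ℤ)) (hD : D.Finite)
    (hlc : (patterns c D).ncard ≤ D.ncard) :
    ∃ f : (ℤ × ℤ) →₀ ℤ, f ≠ 0 ∧ Annihilates f c := by
  have := hD.fintype
  obtain ⟨a₀, a, ha, hrel⟩ := exists_affine_relation_of_ncard_le (patterns_finite hfin hD)
    ⟨_, restrict_translate_mem_patterns c 0⟩
    (hlc.trans_eq (Nat.card_coe_set_eq D).symm |>.trans_eq Nat.card_eq_fintype_card)
  let f : (ℤ × ℤ) →₀ ℤ :=
    (Finsupp.equivFunOnFinite.symm a).mapDomain fun x : D => -(x : ℤ × ℤ)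
  have hf : f ≠ 0 := fun h => ha <| by
    have := Finsupp.mapDomain_injective (neg_injective.comp Subtype.val_injective)
      (h.trans Finsupp.mapDomain_zero.symm)
    exact Finsupp.equivFunOnFinite.symm_apply_eq.mp this
  have hconst : ∀ n, convolve c n f = -a₀ := fun n => by
    have h := hrel _ (restrict_translate_mem_patterns c (-n))
    rw [convolve_mapDomain, Finsupp.sum_fintype _ _ fun _ => zero_mul _]
    simp only [Finsupp.coe_equivFunOnFinite_symm, sub_neg_eq_add, add_comm n] at h ⊢
    exact eq_neg_of_add_eq_zero_right h
  exact ⟨f - f.mapDomain (· + (1, 0)), sub_ne_zero.mpr (f.mapDomain_add_ne_self hf one_pos).symm,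
    annihilates_iff_convolve.mpr fun n => convolve_sub_mapDomain_add_eq_zero hconst n _⟩

/-- A configuration `c : ℤ² → ℤ` taking finitely many values
which has low complexity with respect to some finite non-empty shape `D` is
annihilated by some non-trivial Laurent polynomial. -/
theorem exists_annihilator_of_low_complexity
    (c : ℤ × ℤ → ℤ) (hfin : (Set.range c).Finite)
    (D : Set (ℤ × ℤ)) (hD : D.Finite) (hne : D.Nonempty)
    (hlc : (patterns c D).ncard ≤ D.ncard) :
    ∃ f : (ℤ × ℤ) →₀ ℤ, f ≠ 0 ∧ Annihilates f c :=
  exists_annihilator_of_low_complexity_general c hfin D hD hlc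
end

section
/- Let c : ℤ² → ℤ be a configuration taking only finitely many values which is annihilated by the product (x^{v₁} − 1)⋯(x^{v_m} − 1), i.e., (τ^{v₁} − id) ∘ ⋯ ∘ (τ^{v_m} − id) applied to c is zero, where v₁, …, v_m ∈ ℤ² are nonzero. Let u ∈ ℤ² be nonzero with ⟨u, v_i⟩ ≠ 0 for every i ∈ {1,…,m}. Then the orbit closure of c is deterministic in direction u. -/
/-- The difference operator `τ^v - id`, corresponding to multiplication by the
Laurent polynomial `x^v - 1`. -/
def diffOp (v : ℤ × ℤ) (d : ℤ × ℤ → ℤ) : ℤ × ℤ → ℤ := fun n => d (n - v) - d n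

/-! The difference `f = d - e` of two configurations of the orbit closure is again annihilated
by `(τ^{v₁} − id) ∘ ⋯ ∘ (τ^{v_m} − id)` (the annihilator is closed and translation invariant)
and vanishes on `H_u`. Peeling off the factors one at a time: the partial product
`g = (τ^{v₂} − id) ∘ ⋯ ∘ (τ^{v_m} − id) f` is `v₁`-periodic and, since each factor moves
supports by a bounded amount in direction `u`, still vanishes on a translate of `H_u`. As
`⟨u, v₁⟩ ≠ 0`, the `v₁`-orbit of any point enters that half plane, so `g = 0`; induction on
the number of factors gives `f = 0`. -/

lemma inner2_comm (x u : ℤ × ℤ) : inner2 x u = inner2 u x := by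
  simp only [inner2]; ring

lemma inner2_sub (x v u : ℤ × ℤ) : inner2 (x - v) u = inner2 x u - inner2 v u := by
  simp only [inner2, Prod.fst_sub, Prod.snd_sub]; ring

lemma inner2_zsmul (k : ℤ) (v u : ℤ × ℤ) : inner2 (k • v) u = k * inner2 v u := by
  simp only [inner2, Prod.smul_fst, Prod.smul_snd, smul_eq_mul]; ring

section diffOp

lemma diffOp_sub (v : ℤ × ℤ) (d e : ℤ × ℤ → ℤ) :
    diffOp v (d - e) = diffOp v d - diffOp v e := by
  funext n; simp only [diffOp, Pi.sub_apply]; ring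

lemma foldr_diffOp_sub (vs : List (ℤ × ℤ)) (d e : ℤ × ℤ → ℤ) :
    vs.foldr diffOp (d - e) = vs.foldr diffOp d - vs.foldr diffOp e := by
  induction vs with
  | nil => rfl
  | cons v vs ih => simp only [List.foldr_cons, ih, diffOp_sub]

lemma diffOp_translate (v t : ℤ × ℤ) (d : ℤ × ℤ → ℤ) :
    diffOp v (Translate t d) = Translate t (diffOp v d) := by
  funext n; simp only [diffOp, Translate, sub_right_comm]

lemma foldr_diffOp_translate (vs : List (ℤ × ℤ)) (t : ℤ × ℤ) (d : ℤ × ℤ → ℤ) :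
    vs.foldr diffOp (Translate t d) = Translate t (vs.foldr diffOp d) := by
  induction vs with
  | nil => rfl
  | cons v vs ih => simp only [List.foldr_cons, ih, diffOp_translate]

lemma continuous_diffOp (v : ℤ × ℤ) : Continuous (diffOp v) :=
  continuous_pi fun n => (continuous_apply (n - v)).sub (continuous_apply n)

lemma continuous_foldr_diffOp (vs : List (ℤ × ℤ)) :
    Continuous fun d : ℤ × ℤ → ℤ => vs.foldr diffOp d := by
  induction vs with
  | nil => exact continuous_id
  | cons v vs ih => exact (continuous_diffOp v).comp ih

lemma foldr_diffOp_eq_zero_of_mem_orbitClosure {c : ℤ × ℤ → ℤ} {vs : List (ℤ × ℤ)}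
    (hann : vs.foldr diffOp c = 0) {d : ℤ × ℤ → ℤ} (hd : d ∈ orbitClosure c) :
    vs.foldr diffOp d = 0 := by
  have horbit : orbit c ⊆ {d | vs.foldr diffOp d = 0} := by
    rintro _ ⟨t, rfl⟩
    show vs.foldr diffOp (Translate t c) = 0
    rw [foldr_diffOp_translate, hann]
    rfl
  exact closure_minimal horbit (isClosed_eq (continuous_foldr_diffOp vs) continuous_const) hd

end diffOp

section VanishesBelow

def VanishesBelow (u : ℤ × ℤ) (f : ℤ × ℤ → ℤ) : Prop :=
  ∃ B : ℤ, ∀ x, inner2 x u < B → f x = 0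

variable {u : ℤ × ℤ}

lemma VanishesBelow.diffOp {f : ℤ × ℤ → ℤ} (hf : VanishesBelow u f) (v : ℤ × ℤ) :
    VanishesBelow u (diffOp v f) := by
  obtain ⟨B, hB⟩ := hf
  refine ⟨B - |inner2 v u|, fun x hx => ?_⟩
  have hshift : inner2 (x - v) u < B := by
    rw [inner2_sub]; linarith [neg_abs_le (inner2 v u)]
  have hx' : inner2 x u < B := by linarith [abs_nonneg (inner2 v u)]
  simp only [_root_.diffOp, hB _ hshift, hB _ hx', sub_zero]

lemma VanishesBelow.foldr_diffOp {f : ℤ × ℤ → ℤ} (hf : VanishesBelow u f)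
    (vs : List (ℤ × ℤ)) : VanishesBelow u (vs.foldr _root_.diffOp f) := by
  induction vs with
  | nil => exact hf
  | cons v vs ih => exact ih.diffOp v

lemma eq_zero_of_diffOp_eq_zero {v : ℤ × ℤ} (hv : inner2 v u ≠ 0) {f : ℤ × ℤ → ℤ}
    (hf : VanishesBelow u f) (h : diffOp v f = 0) : f = 0 := by
  obtain ⟨B, hB⟩ := hf
  have hper : Function.Periodic f v := fun x =>
    (by simpa [diffOp, sub_eq_zero] using congrFun h (x + v) : f x = f (x + v)).symm
  funext n
  set a := inner2 v u
  -- `a * a ≥ 1`, so `k = a * k'` shifts `n` down by at least `k'` in direction `u`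
  set k := a * (|inner2 n u - B| + 1)
  have hbelow : inner2 (n - k • v) u < B := by
    have ha : 1 ≤ a * a := by nlinarith [mul_self_pos.mpr hv]
    rw [inner2_sub, inner2_zsmul]
    nlinarith [le_abs_self (inner2 n u - B), abs_nonneg (inner2 n u - B)]
  rw [← hper.sub_zsmul_eq k]
  exact hB _ hbelow

lemma eq_zero_of_foldr_diffOp_eq_zero {vs : List (ℤ × ℤ)} (hvs : ∀ v ∈ vs, inner2 v u ≠ 0)
    {f : ℤ × ℤ → ℤ} (hf : VanishesBelow u f) (h : vs.foldr diffOp f = 0) : f = 0 := by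
  induction vs with
  | nil => exact h
  | cons v vs ih =>
    refine ih (fun w hw => hvs w (List.mem_cons_of_mem v hw)) ?_
    exact eq_zero_of_diffOp_eq_zero (hvs v List.mem_cons_self) (hf.foldr_diffOp vs) h

end VanishesBelow

theorem deterministic_of_not_perpendicular_general
    (c : ℤ × ℤ → ℤ)
    (vs : List (ℤ × ℤ))
    (hann : vs.foldr diffOp c = 0)
    (u : ℤ × ℤ) (huv : ∀ v ∈ vs, inner2 u v ≠ 0) :
    DeterministicIn (orbitClosure c) u := by
  intro d hd e he hde
  have hann' : vs.foldr diffOp (d - e) = 0 := by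
    rw [foldr_diffOp_sub, foldr_diffOp_eq_zero_of_mem_orbitClosure hann hd,
      foldr_diffOp_eq_zero_of_mem_orbitClosure hann he, sub_zero]
  have hbelow : VanishesBelow u (d - e) :=
    ⟨0, fun x hx => sub_eq_zero.mpr (hde hx)⟩
  have hvs : ∀ v ∈ vs, inner2 v u ≠ 0 := fun v hv => inner2_comm v u ▸ huv v hv
  exact sub_eq_zero.mp (eq_zero_of_foldr_diffOp_eq_zero hvs hbelow hann')

/-- If `c : ℤ² → ℤ` takes finitely many values and is annihilated
by `(τ^{v₁} − id) ∘ ⋯ ∘ (τ^{v_m} − id)` with all `vᵢ` nonzero, and `u ≠ 0` is not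
perpendicular to any `vᵢ`, then the orbit closure of `c` is deterministic in
direction `u`. -/
theorem deterministic_of_not_perpendicular
    (c : ℤ × ℤ → ℤ) (hfin : (Set.range c).Finite)
    (vs : List (ℤ × ℤ)) (hne : vs ≠ []) (hnz : ∀ v ∈ vs, v ≠ 0)
    (hann : vs.foldr diffOp c = 0)
    (u : ℤ × ℤ) (hu : u ≠ 0) (huv : ∀ v ∈ vs, inner2 u v ≠ 0) :
    DeterministicIn (orbitClosure c) u :=
  deterministic_of_not_perpendicular_general c vs hann u huv
end

section
/- Let X be a subshift over a finite alphabet A ⊆ ℤ, let v ∈ ℤ² be nonzero, and let u ∈ ℤ² be nonzero with ⟨u, v⟩ = 0. Let k > |⟨u^⊥, v⟩| be such that the box B = B_u^k determines cell 0 in X, i.e., for all d, e ∈ X, d|_B = e|_B implies d(0) = e(0). If c₁, …, c_n ∈ X are pairwise distinct and τ^v(c₁) − c₁ = ⋯ = τ^v(c_n) − c_n, then n ≤ |A|^{|B|}. -/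
/-- Perpendicular vector: `(n,m)^⊥ = (m,−n)`. -/
def perp (u : ℤ × ℤ) : ℤ × ℤ := (u.2, -u.1)

/-- The discrete box `B_u^k`. -/
def Box (u : ℤ × ℤ) (k : ℤ) : Set (ℤ × ℤ) :=
  { x | -k < inner2 x u ∧ inner2 x u < 0 ∧ -k < inner2 x (perp u) ∧ inner2 x (perp u) < k }

/-- A subshift: a set of configurations closed in the product topology and closed
under translations. -/
def IsSubshift {A : Type*} [TopologicalSpace A] (X : Set (ℤ × ℤ → A)) : Prop :=
  IsClosed X ∧ ∀ c ∈ X, ∀ t : ℤ × ℤ, Translate t c ∈ X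


lemma inner2_add_left (a b w : ℤ × ℤ) : inner2 (a + b) w = inner2 a w + inner2 b w := by
  simp only [inner2, Prod.fst_add, Prod.snd_add]; ring

lemma inner2_sub_left (a b w : ℤ × ℤ) : inner2 (a - b) w = inner2 a w - inner2 b w := by
  simp only [inner2, Prod.fst_sub, Prod.snd_sub]; ring

lemma inner2_zsmul_left (j : ℤ) (a w : ℤ × ℤ) : inner2 (j • a) w = j * inner2 a w := by
  simp only [inner2, Prod.smul_fst, Prod.smul_snd, smul_eq_mul]; ring

lemma inner2_comm_s9 (a b : ℤ × ℤ) : inner2 a b = inner2 b a := by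
  simp only [inner2]; ring

lemma inner2_self_smul_eq (x u : ℤ × ℤ) :
    inner2 u u • x = inner2 x u • u + inner2 x (perp u) • perp u := by
  ext <;> simp only [inner2, perp, Prod.smul_fst, Prod.smul_snd, Prod.fst_add, Prod.snd_add,
    smul_eq_mul] <;> ring

lemma inner2_self_pos {u : ℤ × ℤ} (hu : u ≠ 0) : 0 < inner2 u u := by
  have : u.1 ≠ 0 ∨ u.2 ≠ 0 := by
    by_contra! h
    exact hu (Prod.ext h.1 h.2)
  unfold inner2
  rcases this with h | h
  · linarith [mul_self_pos.mpr h, mul_self_nonneg u.2]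
  · linarith [mul_self_pos.mpr h, mul_self_nonneg u.1]

lemma eq_zero_of_inner2_eq_zero {u x : ℤ × ℤ} (hu : u ≠ 0) (h : inner2 x u = 0)
    (h' : inner2 x (perp u) = 0) : x = 0 := by
  have : inner2 u u • x = 0 := by rw [inner2_self_smul_eq, h, h', zero_smul, zero_smul, add_zero]
  exact (smul_eq_zero.mp this).resolve_left (inner2_self_pos hu).ne'

lemma inner2_perp_ne_zero {u v : ℤ × ℤ} (hu : u ≠ 0) (hv : v ≠ 0) (huv : inner2 u v = 0) :
    inner2 (perp u) v ≠ 0 := by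
  rw [inner2_comm_s9] at huv ⊢
  exact fun h => hv (eq_zero_of_inner2_eq_zero hu huv h)

lemma Box_finite {u : ℤ × ℤ} (hu : u ≠ 0) (k : ℤ) : (Box u k).Finite := by
  let coords : ℤ × ℤ → ℤ × ℤ := fun x => (inner2 x u, inner2 x (perp u))
  have hinj : Function.Injective coords := fun x y hxy => by
    rw [← sub_eq_zero]
    apply eq_zero_of_inner2_eq_zero hu <;> rw [inner2_sub_left, sub_eq_zero]
    exacts [congrArg Prod.fst hxy, congrArg Prod.snd hxy]
  refine ((Set.finite_Ioo (-k) 0).prod (Set.finite_Ioo (-k) k)).preimage hinj.injOn |>.subset ?_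
  rintro x ⟨h₁, h₂, h₃, h₄⟩
  exact ⟨⟨h₁, h₂⟩, h₃, h₄⟩

lemma exists_inner2_le {u : ℤ × ℤ} (hu : u ≠ 0) (a : ℤ) : ∃ t, inner2 t u ≤ a := by
  refine ⟨(-|a|) • u, ?_⟩
  rw [inner2_zsmul_left]
  nlinarith [inner2_self_pos hu, abs_nonneg a, neg_abs_le a]

lemma exists_add_zsmul_mem_Box {u v : ℤ × ℤ} {k : ℤ} (huv : inner2 u v = 0)
    (hs : inner2 (perp u) v ≠ 0) (hk : |inner2 (perp u) v| < k) {y : ℤ × ℤ}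
    (hy₁ : -k < inner2 y u) (hy₂ : inner2 y u < 0) : ∃ j : ℤ, y + j • v ∈ Box u k := by
  set s := inner2 (perp u) v
  set p := inner2 y (perp u)
  have hmod : inner2 (y + -(p / s) • v) (perp u) = p % s := by
    rw [inner2_add_left, inner2_zsmul_left, inner2_comm_s9 v, Int.emod_def]; ring
  have hu : inner2 (y + -(p / s) • v) u = inner2 y u := by
    rw [inner2_add_left, inner2_zsmul_left, inner2_comm_s9 v, huv, mul_zero, add_zero]
  refine ⟨-(p / s), ?_, ?_, ?_, ?_⟩
  · rw [hu]; exact hy₁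
  · rw [hu]; exact hy₂
  · rw [hmod]; linarith [Int.emod_nonneg p hs, abs_nonneg s]
  · rw [hmod]; exact (Int.emod_lt_abs p hs).trans hk

lemma eq_of_eqOn_add_Box {X : Set (ℤ × ℤ → ℤ)} {u : ℤ × ℤ} {k : ℤ}
    (hX : ∀ c ∈ X, ∀ t, Translate t c ∈ X)
    (hdet : ∀ d ∈ X, ∀ e ∈ X, Set.EqOn d e (Box u k) → d 0 = e 0)
    {d e : ℤ × ℤ → ℤ} (hd : d ∈ X) (he : e ∈ X) {x : ℤ × ℤ}
    (h : ∀ z ∈ Box u k, d (z + x) = e (z + x)) : d x = e x := by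
  have := hdet _ (hX d hd (-x)) _ (hX e he (-x)) fun z hz => by
    simpa only [Translate, sub_neg_eq_add] using h z hz
  simpa only [Translate, zero_sub, neg_neg] using this

lemma eqOn_of_eqOn_strip {X : Set (ℤ × ℤ → ℤ)} {u : ℤ × ℤ} {k : ℤ}
    (hX : ∀ c ∈ X, ∀ t, Translate t c ∈ X)
    (hdet : ∀ d ∈ X, ∀ e ∈ X, Set.EqOn d e (Box u k) → d 0 = e 0)
    {d e : ℤ × ℤ → ℤ} (hd : d ∈ X) (he : e ∈ X) (a : ℤ)
    (h : Set.EqOn d e {x | a - k < inner2 x u ∧ inner2 x u < a}) :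
    Set.EqOn d e {x | a - k < inner2 x u} := by
  have below (m : ℤ) (hm : a ≤ m) : Set.EqOn d e {x | a - k < inner2 x u ∧ inner2 x u < m} := by
    induction m, hm using Int.leInduction with
    | base => exact h
    | succ m ham ih =>
      rintro x ⟨hx₁, hx₂⟩
      rcases lt_or_ge (inner2 x u) m with hxm | hxm
      · exact ih ⟨hx₁, hxm⟩
      refine eq_of_eqOn_add_Box hX hdet hd he fun z ⟨hz₁, hz₂, _, _⟩ => ih ?_
      constructor <;> rw [inner2_add_left] <;> omega
  intro x hx
  exact below (max a (inner2 x u + 1)) (le_max_left _ _) ⟨hx, by omega⟩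

lemma periodic_sub_of_diffOp_eq {v : ℤ × ℤ} {d e : ℤ × ℤ → ℤ} (hde : diffOp v d = diffOp v e) :
    Function.Periodic (d - e) v := fun x => by
  have := congrFun hde (x + v)
  simp only [diffOp, add_sub_cancel_right] at this
  simp only [Pi.sub_apply]
  linarith

lemma eqOn_strip_of_diffOp_eq {u v t : ℤ × ℤ} {k : ℤ} (huv : inner2 u v = 0)
    (hs : inner2 (perp u) v ≠ 0) (hk : |inner2 (perp u) v| < k) {d e : ℤ × ℤ → ℤ}
    (hde : diffOp v d = diffOp v e) (h : ∀ z ∈ Box u k, d (z + t) = e (z + t)) :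
    Set.EqOn d e {x | inner2 t u - k < inner2 x u ∧ inner2 x u < inner2 t u} := by
  rintro x ⟨hx₁, hx₂⟩
  obtain ⟨j, hj⟩ := exists_add_zsmul_mem_Box (y := x - t) huv hs hk
    (by rw [inner2_sub_left]; linarith) (by rw [inner2_sub_left]; linarith)
  have := h _ hj
  rw [show x - t + j • v + t = x + j • v by abel] at this
  rw [← sub_eq_zero, ← Pi.sub_apply, ← (periodic_sub_of_diffOp_eq hde).zsmul j x, Pi.sub_apply,
    this, sub_self]

/-- In the setting of the determinism box: pairwise distinct
configurations `c₁, …, c_N ∈ X` whose images under `τ^v − id` all coincide number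
at most `|A|^{|B|}`. -/
theorem card_le_of_equal_diff
    (A : Finset ℤ) (X : Set (ℤ × ℤ → ℤ)) (hX : IsSubshift X)
    (hA : ∀ c ∈ X, ∀ n : ℤ × ℤ, c n ∈ A)
    (v : ℤ × ℤ) (hv : v ≠ 0) (u : ℤ × ℤ) (hu : u ≠ 0) (huv : inner2 u v = 0)
    (k : ℤ) (hk : |inner2 (perp u) v| < k)
    (hdet : ∀ d ∈ X, ∀ e ∈ X, Set.EqOn d e (Box u k) → d 0 = e 0)
    (N : ℕ) (cs : Fin N → (ℤ × ℤ → ℤ)) (hcs : ∀ i, cs i ∈ X)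
    (hinj : Function.Injective cs)
    (hdiff : ∀ i j, diffOp v (cs i) = diffOp v (cs j)) :
    N ≤ A.card ^ (Box u k).ncard := by
  have hs := inner2_perp_ne_zero hu hv huv
  have : Finite (Box u k) := (Box_finite hu k).to_subtype
  have hwitness (i j : Fin N) : ∃ x, cs i x = cs j x → cs i = cs j := by
    by_cases h : cs i = cs j
    · exact ⟨0, fun _ => h⟩
    · obtain ⟨x, hx⟩ := Function.ne_iff.mp h
      exact ⟨x, fun h' => absurd h' hx⟩
  choose D hD using hwitness
  obtain ⟨a, ha⟩ := Finite.exists_ge fun p : Fin N × Fin N => inner2 (D p.1 p.2) u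
  obtain ⟨t, ht⟩ := exists_inner2_le hu a
  let pattern (i : Fin N) (z : Box u k) : A := ⟨cs i (z + t), hA _ (hcs i) _⟩
  have hpattern : Function.Injective pattern := fun i j hij => by
    have hbox (z) (hz : z ∈ Box u k) : cs i (z + t) = cs j (z + t) :=
      congrArg Subtype.val (congrFun hij ⟨z, hz⟩)
    refine hinj (hD i j (eqOn_of_eqOn_strip hX.2 hdet (hcs i) (hcs j) _
      (eqOn_strip_of_diffOp_eq huv hs hk (hdiff i j) hbox) ?_))
    have := ha (i, j)
    show inner2 t u - k < _
    linarith [abs_nonneg (inner2 (perp u) v)]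
  calc N = Nat.card (Fin N) := (Nat.card_fin N).symm
    _ ≤ Nat.card (Box u k → A) := Nat.card_le_card_of_injective pattern hpattern
    _ = A.card ^ (Box u k).ncard := by
      rw [Nat.card_fun, Nat.card_coe_set_eq, Nat.card_eq_finsetCard]
end
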